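/- arXiv:2511.10608 — 2 statements merged into one kernel-verified Lean document; each statement's English description precedes it below -/
import Mathlib

section
/- For any union-closed family 𝒜 with universe [n] and length ℓ, there exists an element y ∈ [n] that belongs to at most ∑_{i=0}^{ℓ} C(n−1, i) of the member sets of 𝒜. -/
/-!
Fix any element `y`. Removing `y` from the members of `𝒜` that contain it is injective and yields a
union-closed family on the other `n - 1` elements whose chains are no longer than those of `𝒜`.
So it suffices that a union-closed family on `m` elements with no chain of more than `k` members
has at most `∑_{i<k} C(m, i)` members. This goes by induction on `m`: split off an element `a`.
The sets containing `a`, with `a` removed, form such a family on `m - 1` elements with chains of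
at most `k` members. If some set `B` contains `a`, then any chain of sets avoiding `a` extends
by the union of its members with `B`, so those sets form a family whose chains have at most
`k - 1` members. Pascal's rule adds the two bounds up.
-/

open Finset

namespace Finset

variable {α : Type*}

def ChainsCardLE (ℬ : Finset (Finset α)) (k : ℕ) : Prop :=
  ∀ 𝒞 ⊆ ℬ, IsChain (· ⊆ ·) (𝒞 : Set (Finset α)) → #𝒞 ≤ k

variable {ℬ : Finset (Finset α)} {k : ℕ}

namespace ChainsCardLE

lemma mono {ℬ' : Finset (Finset α)} (h : ChainsCardLE ℬ k) (hsub : ℬ' ⊆ ℬ) :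
    ChainsCardLE ℬ' k :=
  fun 𝒞 h𝒞 => h 𝒞 (h𝒞.trans hsub)

lemma eq_empty_of_zero (h : ChainsCardLE ℬ 0) : ℬ = ∅ :=
  eq_empty_of_forall_notMem fun A hA => by
    simpa using h {A} (singleton_subset_iff.2 hA) (by simp)

end ChainsCardLE

variable [DecidableEq α] {s : Finset α} {a : α}

lemma card_memberSubfamily (a : α) (ℬ : Finset (Finset α)) :
    #(ℬ.memberSubfamily a) = #{s ∈ ℬ | a ∈ s} :=
  card_image_of_injOn <| (erase_injOn' a).mono fun _ hs => (mem_filter.1 hs).2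

lemma memberSubfamily_subset_powerset (h : ℬ ⊆ (insert a s).powerset) :
    ℬ.memberSubfamily a ⊆ s.powerset := by
  intro u hu
  rw [mem_memberSubfamily] at hu
  exact mem_powerset.2 <| (insert_subset_insert_iff hu.2).1 <| mem_powerset.1 (h hu.1)

lemma nonMemberSubfamily_subset_powerset (h : ℬ ⊆ (insert a s).powerset) :
    ℬ.nonMemberSubfamily a ⊆ s.powerset := by
  intro u hu
  rw [mem_nonMemberSubfamily] at hu
  exact mem_powerset.2 <| (subset_insert_iff_of_notMem hu.2).1 <| mem_powerset.1 (h hu.1)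

lemma _root_.SupClosed.memberSubfamily (hℬ : SupClosed (ℬ : Set (Finset α))) (a : α) :
    SupClosed (ℬ.memberSubfamily a : Set (Finset α)) := by
  intro u hu v hv
  simp only [mem_coe, mem_memberSubfamily] at hu hv ⊢
  refine ⟨?_, by simp [hu.2, hv.2]⟩
  rw [sup_eq_union, insert_union_distrib]
  exact hℬ hu.1 hv.1

lemma _root_.SupClosed.nonMemberSubfamily (hℬ : SupClosed (ℬ : Set (Finset α))) (a : α) :
    SupClosed (ℬ.nonMemberSubfamily a : Set (Finset α)) := by
  intro u hu v hv
  simp only [mem_coe, mem_nonMemberSubfamily] at hu hv ⊢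
  exact ⟨hℬ hu.1 hv.1, by simp [hu.2, hv.2]⟩

namespace ChainsCardLE

lemma memberSubfamily (h : ChainsCardLE ℬ k) (a : α) :
    ChainsCardLE (ℬ.memberSubfamily a) k := by
  intro 𝒞 h𝒞 hchain
  have h𝒞' : ∀ u ∈ 𝒞, insert a u ∈ ℬ ∧ a ∉ u := fun u hu => mem_memberSubfamily.1 (h𝒞 hu)
  have hinj : Set.InjOn (insert a) (𝒞 : Set (Finset α)) :=
    insert_erase_invOn.2.injOn.mono fun u hu => (h𝒞' u hu).2
  calc #𝒞 = #(𝒞.image (insert a)) := (card_image_of_injOn hinj).symm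
    _ ≤ k := h _ (image_subset_iff.2 fun u hu => (h𝒞' u hu).1) <| by
      rw [coe_image]
      exact hchain.image_of_map_rel _ _ _ fun _ _ h => insert_subset_insert a h

lemma nonMemberSubfamily (h : ChainsCardLE ℬ (k + 1)) (hℬ : SupClosed (ℬ : Set (Finset α)))
    {B : Finset α} (hB : B ∈ ℬ) (haB : a ∈ B) :
    ChainsCardLE (ℬ.nonMemberSubfamily a) k := by
  intro 𝒞 h𝒞 hchain
  set D := (insert B 𝒞).sup id
  have hD : D ∈ ℬ := hℬ.finsetSup_mem (insert_nonempty B 𝒞) <| forall_mem_insert _ _ _ |>.2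
    ⟨hB, fun u hu => (mem_nonMemberSubfamily.1 (h𝒞 hu)).1⟩
  have hD𝒞 : D ∉ 𝒞 := fun hD𝒞 =>
    (mem_nonMemberSubfamily.1 (h𝒞 hD𝒞)).2 (le_sup (f := id) (mem_insert_self B 𝒞) haB)
  have hchain' : IsChain (· ⊆ ·) ((insert D 𝒞 : Finset (Finset α)) : Set (Finset α)) := by
    rw [coe_insert]
    exact hchain.insert fun u hu _ => Or.inr (le_sup (f := id) (mem_insert_of_mem hu))
  have := h _ (insert_subset hD fun u hu => (mem_nonMemberSubfamily.1 (h𝒞 hu)).1) hchain'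
  rw [card_insert_of_notMem hD𝒞] at this
  omega

end ChainsCardLE

end Finset

lemma Nat.sum_range_succ_choose_succ (m k : ℕ) :
    ∑ i ∈ range (k + 1), (m + 1).choose i =
      ∑ i ∈ range (k + 1), m.choose i + ∑ i ∈ range k, m.choose i := by
  rw [sum_range_succ', sum_range_succ' (fun i => m.choose i)]
  simp only [Nat.choose_succ_succ, sum_add_distrib, Nat.choose_zero_right]
  ring

theorem Finset.card_le_sum_choose_of_supClosed {α : Type*} [DecidableEq α] {s : Finset α}
    {ℬ : Finset (Finset α)} {k : ℕ} (hs : ℬ ⊆ s.powerset) (hℬ : SupClosed (ℬ : Set (Finset α)))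
    (hk : ChainsCardLE ℬ k) :
    #ℬ ≤ ∑ i ∈ range k, (#s).choose i := by
  induction s using Finset.induction_on generalizing ℬ k with
  | empty =>
    rcases k with _ | k
    · simp [hk.eq_empty_of_zero]
    · simpa [sum_range_succ'] using card_le_card hs
  | insert a t ha ih =>
    rcases k with _ | k
    · simp [hk.eq_empty_of_zero]
    have hmem := ih (memberSubfamily_subset_powerset hs) (hℬ.memberSubfamily a)
      (hk.memberSubfamily a)
    rw [← card_memberSubfamily_add_card_nonMemberSubfamily a, card_insert_of_notMem ha,
      Nat.sum_range_succ_choose_succ]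
    rcases (ℬ.memberSubfamily a).eq_empty_or_nonempty with hempty | ⟨B, hB⟩
    · have hnon := ih (nonMemberSubfamily_subset_powerset hs) (hℬ.nonMemberSubfamily a)
        (hk.mono (filter_subset _ _))
      rw [hempty, card_empty]
      omega
    · have hnon := ih (nonMemberSubfamily_subset_powerset hs) (hℬ.nonMemberSubfamily a)
        (hk.nonMemberSubfamily hℬ (mem_memberSubfamily.1 hB).1 (mem_insert_self a B))
      omega

theorem union_closed_rare_element_general (n ℓ : ℕ) (hn : 0 < n)
    (𝒜 : Finset (Finset (Fin n)))
    (huc : ∀ X ∈ 𝒜, ∀ Y ∈ 𝒜, X ∪ Y ∈ 𝒜)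
    (hmax : ∀ 𝒞 ⊆ 𝒜, IsChain (· ⊆ ·) (𝒞 : Set (Finset (Fin n))) → 𝒞.card ≤ ℓ + 1) :
    ∃ y : Fin n, (𝒜.filter (fun A => y ∈ A)).card ≤
      ∑ i ∈ Finset.range (ℓ + 1), (n - 1).choose i := by
  let y : Fin n := ⟨0, hn⟩
  have hsub : 𝒜.memberSubfamily y ⊆ (univ.erase y).powerset :=
    memberSubfamily_subset_powerset (by simp)
  have hbound := card_le_sum_choose_of_supClosed hsub
    (SupClosed.memberSubfamily (fun X hX Y hY => huc X hX Y hY) y)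
    (ChainsCardLE.memberSubfamily hmax y)
  rw [card_memberSubfamily, card_erase_of_mem (mem_univ y), card_univ, Fintype.card_fin] at hbound
  exact ⟨y, hbound⟩

/-- In any union-closed family with universe [n] and length ℓ, some element
y ∈ [n] belongs to at most ∑_{i=0}^{ℓ} C(n−1,i) member sets. -/
theorem union_closed_rare_element (n ℓ : ℕ) (hn : 0 < n)
    (𝒜 : Finset (Finset (Fin n)))
    (hne : ∃ A ∈ 𝒜, A.Nonempty)
    (huc : ∀ X ∈ 𝒜, ∀ Y ∈ 𝒜, X ∪ Y ∈ 𝒜)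
    (huniv : 𝒜.sup id = Finset.univ)
    (hchain : ∃ 𝒞 ⊆ 𝒜, IsChain (· ⊆ ·) (𝒞 : Set (Finset (Fin n))) ∧ 𝒞.card = ℓ + 1)
    (hmax : ∀ 𝒞 ⊆ 𝒜, IsChain (· ⊆ ·) (𝒞 : Set (Finset (Fin n))) → 𝒞.card ≤ ℓ + 1) :
    ∃ y : Fin n, (𝒜.filter (fun A => y ∈ A)).card ≤
      ∑ i ∈ Finset.range (ℓ + 1), (n - 1).choose i :=
  union_closed_rare_element_general n ℓ hn 𝒜 huc hmax
end

section
/- Let Θ(k, n, p) = (k^p − 1)/(k − 1) + 2^n (1 − 2^{−k})^p for integers k ≥ 2, n ≥ k, p ≥ 0. Then Θ(k, n, p+1) ≤ Θ(k, n, p) if and only if p ≤ (n − k)/log₂(k/(1 − 2^{−k})). Consequently, p̂ = ⌊(n−k)/log₂(k/(1−2^{−k}))⌋ + 1 minimizes Θ(k, n, p) over nonnegative integers p. -/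
/-!
Telescoping the first term and factoring the second gives
`Θ(k,n,p+1) - Θ(k,n,p) = k^p - 2^(n-k) (1 - 2^-k)^p`, so `Θ` steps down exactly while
`(k / (1 - 2^-k))^p ≤ 2^(n-k)`; taking `log₂` turns this into `p ≤ (n-k)/log₂(k/(1-2^-k)) =: c`.
Hence `Θ(k,n,·)` decreases up to `⌊c⌋ + 1` and increases afterwards.
-/

/-- Θ(k,n,p) = (k^p − 1)/(k − 1) + 2^n (1 − 2^{−k})^p. -/
noncomputable def Theta (k n p : ℕ) : ℝ :=
  ((k : ℝ) ^ p - 1) / ((k : ℝ) - 1) + 2 ^ n * (1 - (2 : ℝ)⁻¹ ^ k) ^ p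

theorem le_apply_of_succ_le_iff_lt {α : Type*} [LinearOrder α] {f : ℕ → α} {N : ℕ}
    (hf : ∀ p, f (p + 1) ≤ f p ↔ p < N) (q : ℕ) : f N ≤ f q := by
  rcases le_total q N with hqN | hNq
  · refine antitoneOn_of_succ_le Set.ordConnected_Iic (fun p _ _ hp ↦ ?_) hqN le_rfl hqN
    exact (hf p).2 (Order.succ_le_iff.1 hp)
  · refine monotoneOn_of_le_succ Set.ordConnected_Ici (fun p _ hp _ ↦ ?_) le_rfl hNq hNq
    exact le_of_not_ge fun h ↦ (hf p).1 h |>.not_ge hp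

theorem apply_floor_add_one_le_of_succ_le_iff {α K : Type*} [LinearOrder α] [Semiring K]
    [PartialOrder K] [FloorSemiring K] {f : ℕ → α} {c : K} (hc : 0 ≤ c)
    (hf : ∀ p : ℕ, f (p + 1) ≤ f p ↔ (p : K) ≤ c) (q : ℕ) : f (⌊c⌋₊ + 1) ≤ f q :=
  le_apply_of_succ_le_iff_lt (fun p ↦ by rw [hf, Nat.lt_succ_iff, Nat.le_floor_iff hc]) q

theorem one_lt_div_one_sub_inv_two_pow {k : ℕ} (hk : k ≠ 0) :
    1 < (k : ℝ) / (1 - (2 : ℝ)⁻¹ ^ k) := by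
  have hpos : 0 < (2 : ℝ)⁻¹ ^ k := by positivity
  have hlt : (2 : ℝ)⁻¹ ^ k < 1 := pow_lt_one₀ (by norm_num) (by norm_num) hk
  have hk1 : (1 : ℝ) ≤ k := by exact_mod_cast Nat.one_le_iff_ne_zero.2 hk
  rw [one_lt_div (by linarith)]
  linarith

theorem Theta_succ_sub {k : ℕ} (hk : k ≠ 1) (n p : ℕ) :
    Theta k n (p + 1) - Theta k n p =
      (k : ℝ) ^ p - 2 ^ n * (2 : ℝ)⁻¹ ^ k * (1 - (2 : ℝ)⁻¹ ^ k) ^ p := by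
  have hk' : (k : ℝ) - 1 ≠ 0 := sub_ne_zero.2 (by exact_mod_cast hk)
  unfold Theta
  field_simp
  ring

theorem Theta_succ_le_iff {k : ℕ} (hk : 1 < k) (n p : ℕ) :
    Theta k n (p + 1) ≤ Theta k n p ↔
      (p : ℝ) * Real.logb 2 ((k : ℝ) / (1 - (2 : ℝ)⁻¹ ^ k)) ≤ (n : ℝ) - k := by
  set q : ℝ := 1 - (2 : ℝ)⁻¹ ^ k
  have hq : 0 < q := sub_pos.2 (pow_lt_one₀ (by norm_num) (by norm_num) (by omega))
  have hscale : (2 : ℝ) ^ n * (2 : ℝ)⁻¹ ^ k = (2 : ℝ) ^ ((n : ℝ) - k) := by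
    rw [Real.rpow_sub two_pos, Real.rpow_natCast, Real.rpow_natCast, inv_pow, div_eq_mul_inv]
  rw [← sub_nonpos, Theta_succ_sub hk.ne', sub_nonpos, hscale, ← Real.logb_pow,
    Real.logb_le_iff_le_rpow one_lt_two (by positivity), div_pow, div_le_iff₀ (by positivity)]

/-- Θ(k,n,p+1) ≤ Θ(k,n,p) iff p ≤ (n−k)/log₂(k/(1−2^{−k})); consequently
p̂ = ⌊(n−k)/log₂(k/(1−2^{−k}))⌋ + 1 minimizes Θ(k,n,·) over ℕ. -/
theorem Theta_decreasing_iff_and_min (k n : ℕ) (hk : 2 ≤ k) (hkn : k ≤ n) :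
    (∀ p : ℕ, Theta k n (p + 1) ≤ Theta k n p ↔
      (p : ℝ) ≤ ((n : ℝ) - k) / Real.logb 2 ((k : ℝ) / (1 - (2 : ℝ)⁻¹ ^ k))) ∧
    (∀ q : ℕ, Theta k n
        (⌊((n : ℝ) - k) / Real.logb 2 ((k : ℝ) / (1 - (2 : ℝ)⁻¹ ^ k))⌋₊ + 1)
      ≤ Theta k n q) := by
  set L := Real.logb 2 ((k : ℝ) / (1 - (2 : ℝ)⁻¹ ^ k))
  have hL : 0 < L := Real.logb_pos one_lt_two (one_lt_div_one_sub_inv_two_pow (by omega))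
  have hstep : ∀ p : ℕ, Theta k n (p + 1) ≤ Theta k n p ↔ (p : ℝ) ≤ ((n : ℝ) - k) / L :=
    fun p ↦ (Theta_succ_le_iff hk n p).trans (le_div_iff₀ hL).symm
  have hthreshold : 0 ≤ ((n : ℝ) - k) / L :=
    div_nonneg (sub_nonneg.2 (by exact_mod_cast hkn)) hL.le
  exact ⟨hstep, apply_floor_add_one_le_of_succ_le_iff hthreshold hstep⟩
end
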